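/- Let F be an infinite field, n ≥ 3, and let g = (V,[,]) be an n-dimensional F-algebra such that [x,x] ∈ span_F(x) for all x ∈ V but there exist x,y ∈ V with [x,y] ∉ span_F(x,y). Then g degenerates to h_n, the direct sum of the 3-dimensional Heisenberg Lie algebra with the (n-3)-dimensional abelian Lie algebra. -/

import Mathlib

open scoped BigOperators

def actSV {F : Type*} [Field F] {n : ℕ} (g : GL (Fin n) F)
    (lam : Fin n → Fin n → Fin n → F) : Fin n → Fin n → Fin n → F :=
  fun a b c => ∑ i, ∑ j, ∑ k,
    (g : Matrix (Fin n) (Fin n) F) i a * (g : Matrix (Fin n) (Fin n) F) j b *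
      ((g⁻¹ : GL (Fin n) F) : Matrix (Fin n) (Fin n) F) c k * lam i j k

def orbitSV {F : Type*} [Field F] {n : ℕ} (lam : Fin n → Fin n → Fin n → F) :
    Set (Fin n → Fin n → Fin n → F) :=
  {mu | ∃ g : GL (Fin n) F, mu = actSV g lam}

def zClosure {F : Type*} [Field F] {n : ℕ} (S : Set (Fin n → Fin n → Fin n → F)) :
    Set (Fin n → Fin n → Fin n → F) :=
  {mu | ∀ p : MvPolynomial (Fin n × Fin n × Fin n) F,
      (∀ lam ∈ S, MvPolynomial.eval (fun t => lam t.1 t.2.1 t.2.2) p = 0) →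
      MvPolynomial.eval (fun t => mu t.1 t.2.1 t.2.2) p = 0}

/-! Choose `x, y` with `[x,y] ∉ span{x,y}`. Since `[v,v] ∈ span{v}`, polarization puts
`[x,y] + [y,x]` in `span{x,y}`, and `x, y, [x,y]` are linearly independent; extend them to a basis.
The one-parameter subgroup `t ↦ diag(t^q₁, …, t^qₙ)` with `q = (1, 1, 2, …, 2)` rescales the
structure constant `λᵢⱼₖ` by `t^(qᵢ + qⱼ - qₖ)`, a polynomial in `t`. Since `F` is infinite, a
polynomial vanishing on the orbit vanishes on the value at `t = 0` of this curve, and that value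
keeps exactly the components of
`[x,x], [x,y], [y,x], [y,y]` outside `span{x,y}`: the structure constants of `h_n`. -/

section Degeneration

open Polynomial

variable {F : Type*} [Field F] {n : ℕ}

theorem mem_zClosure_of_polynomial_curve [Infinite F] {S : Set (Fin n → Fin n → Fin n → F)}
    (γ : Fin n → Fin n → Fin n → F[X])
    (hγ : ∀ t : F, t ≠ 0 → (fun a b c => (γ a b c).eval t) ∈ S) :
    (fun a b c => (γ a b c).eval 0) ∈ zClosure S := by
  intro p hp
  set Q : F[X] := MvPolynomial.aeval (fun T => γ T.1 T.2.1 T.2.2) p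
  have hQ (t : F) : Q.eval t = MvPolynomial.eval (fun T => (γ T.1 T.2.1 T.2.2).eval t) p := by
    rw [← coe_aeval_eq_eval, MvPolynomial.comp_aeval_apply]
    rfl
  have hQ0 : Q = 0 := Q.eq_zero_of_infinite_isRoot <|
    (Set.finite_singleton 0).infinite_compl.mono fun t ht => by
      simpa [hQ] using hp _ (hγ t ht)
  simpa [hQ] using congrArg (eval 0) hQ0

def diagonalGL (d : Fin n → Fˣ) : GL (Fin n) F :=
  Units.map (Matrix.diagonalRingHom (Fin n) F).toMonoidHom (MulEquiv.piUnits.symm d)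

theorem actSV_diagonalGL (d : Fin n → Fˣ) (lam : Fin n → Fin n → Fin n → F) (a b c : Fin n) :
    actSV (diagonalGL d) lam a b c = d a * d b * (d c)⁻¹ * lam a b c := by
  simp [actSV, diagonalGL, Matrix.diagonal_apply, MulEquiv.piUnits]

theorem mem_zClosure_orbitSV_of_weights [Infinite F] (lam : Fin n → Fin n → Fin n → F)
    (q : Fin n → ℕ) (hq : ∀ a b c, lam a b c ≠ 0 → q c ≤ q a + q b) :
    (fun a b c => if q a + q b = q c then lam a b c else 0) ∈ zClosure (orbitSV lam) := by
  have hcurve := mem_zClosure_of_polynomial_curve (S := orbitSV lam)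
    (fun a b c => C (lam a b c) * X ^ (q a + q b - q c)) fun t ht =>
      ⟨diagonalGL fun i => Units.mk0 (t ^ q i) (pow_ne_zero _ ht), by
        ext a b c
        rw [actSV_diagonalGL]
        by_cases hl : lam a b c = 0
        · simp [hl]
        · simp [pow_sub₀ t ht (hq a b c hl), ← pow_add]
          ring⟩
  convert hcurve using 4 with a b c
  by_cases hl : lam a b c = 0
  · simp [hl]
  · have hle := hq a b c hl
    simp [zero_pow_eq, Nat.sub_eq_zero_iff_le, hle.ge_iff_eq', eq_comm]

end Degeneration

section LinearAlgebra

variable {F V : Type*} [Field F] [AddCommGroup V] [Module F V]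

theorem LinearIndependent.exists_extension_fin {k : ℕ} {f : Fin k → V}
    (hf : LinearIndependent F f) {m : ℕ} (hkm : k ≤ m) (hm : m ≤ Module.finrank F V) :
    ∃ g : Fin m → V, LinearIndependent F g ∧ ∀ i, g (Fin.castLE hkm i) = f i := by
  induction m, hkm using Nat.le_induction with
  | base => exact ⟨f, hf, fun i => by simp⟩
  | succ m hkm ih =>
    obtain ⟨g, hg, hgf⟩ := ih (by omega)
    obtain ⟨v, hv⟩ := exists_linearIndependent_snoc_of_lt_finrank hg (by omega)
    exact ⟨Fin.snoc g v, hv, fun i => (Fin.snoc_castSucc (α := fun _ => V) ..).trans (hgf i)⟩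

theorem LinearIndependent.exists_basis_fin_extension [FiniteDimensional F V] {k n : ℕ}
    {f : Fin k → V} (hf : LinearIndependent F f) (hkn : k ≤ n) (hV : Module.finrank F V = n) :
    ∃ b : Module.Basis (Fin n) F V, ∀ i, b (Fin.castLE hkn i) = f i := by
  obtain ⟨g, hg, hgf⟩ := hf.exists_extension_fin hkn hV.ge
  exact ⟨basisOfLinearIndependentOfCardEqFinrank' g hg (by simp [hV]), by simpa using hgf⟩

theorem Module.Basis.repr_apply_eq_zero_of_mem_span_pair {ι : Type*} (b : Module.Basis ι F V)
    {i j k : ι} {v : V} (hv : v ∈ Submodule.span F {b i, b j}) (hki : k ≠ i) (hkj : k ≠ j) :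
    b.repr v k = 0 := by
  rw [← Set.image_pair, b.mem_span_image] at hv
  exact Finsupp.notMem_support_iff.1 fun hk => by simpa [hki, hkj] using hv hk

variable {B : V →ₗ[F] V →ₗ[F] V}

theorem apply_add_apply_swap_mem_span_pair (hB : ∀ v, B v v ∈ Submodule.span F {v}) (x y : V) :
    B x y + B y x ∈ Submodule.span F {x, y} := by
  set W := Submodule.span F {x, y}
  have hsq {v : V} (hv : v ∈ W) : B v v ∈ W :=
    Submodule.span_le.2 (Set.singleton_subset_iff.2 hv) (hB v)
  have hx : x ∈ W := Submodule.subset_span (by simp)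
  have hy : y ∈ W := Submodule.subset_span (by simp)
  have hpolar : B x y + B y x = B (x + y) (x + y) - B x x - B y y := by
    simp only [map_add, LinearMap.add_apply]; abel
  rw [hpolar]
  exact W.sub_mem (W.sub_mem (hsq (W.add_mem hx hy)) (hsq hx)) (hsq hy)

theorem linearIndependent_apply_of_notMem_span_pair (hB : ∀ v, B v v ∈ Submodule.span F {v})
    {x y : V} (hxy : B x y ∉ Submodule.span F {x, y}) :
    LinearIndependent F ![x, y, B x y] := by
  have hy : y ≠ 0 := by rintro rfl; simp at hxy
  have hx (a : F) : a • y ≠ x := by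
    rintro rfl
    obtain ⟨c, hc⟩ := Submodule.mem_span_singleton.1 (hB y)
    rw [map_smul, LinearMap.smul_apply, ← hc, smul_smul] at hxy
    exact hxy (Submodule.smul_mem _ _ (Submodule.subset_span (by simp)))
  have hsnoc : ![x, y, B x y] = Fin.snoc ![x, y] (B x y) := by
    ext i; fin_cases i <;> simp
  rw [hsnoc]
  exact (linearIndependent_fin2.2 ⟨hy, hx⟩).finSnoc
    (by simpa [Matrix.range_cons_cons_empty, Set.pair_comm] using hxy)

noncomputable def structureConstants {ι : Type*} (b : Module.Basis ι F V)
    (B : V →ₗ[F] V →ₗ[F] V) : ι → ι → ι → F :=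
  fun i j k => b.repr (B (b i) (b j)) k

end LinearAlgebra

section Heisenberg

def heisenbergWeight {n : ℕ} (i : Fin n) : ℕ := if i.val < 2 then 1 else 2

theorem heisenbergWeight_le_add {n : ℕ} (i j k : Fin n) :
    heisenbergWeight k ≤ heisenbergWeight i + heisenbergWeight j := by
  unfold heisenbergWeight; split_ifs <;> omega

theorem heisenbergWeight_add_eq_iff {n : ℕ} (i j k : Fin n) :
    heisenbergWeight i + heisenbergWeight j = heisenbergWeight k ↔
      i.val < 2 ∧ j.val < 2 ∧ 2 ≤ k.val := by
  unfold heisenbergWeight; split_ifs <;> omega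

variable {F V : Type*} [Field F] [AddCommGroup V] [Module F V]

theorem structureConstants_heisenberg_limit {n : ℕ} (hn : 3 ≤ n) (b : Module.Basis (Fin n) F V)
    {B : V →ₗ[F] V →ₗ[F] V} (hB : ∀ v, B v v ∈ Submodule.span F {v})
    (hb : B (b ⟨0, by omega⟩) (b ⟨1, by omega⟩) = b ⟨2, by omega⟩) (i j k : Fin n) :
    (if heisenbergWeight i + heisenbergWeight j = heisenbergWeight k then
        structureConstants b B i j k else 0) =
      if i = (⟨0, by omega⟩ : Fin n) ∧ j = (⟨1, by omega⟩ : Fin n) ∧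
          k = (⟨2, by omega⟩ : Fin n) then 1
      else if i = (⟨1, by omega⟩ : Fin n) ∧ j = (⟨0, by omega⟩ : Fin n) ∧
          k = (⟨2, by omega⟩ : Fin n) then -1
      else 0 := by
  set i₀ : Fin n := ⟨0, by omega⟩
  set i₁ : Fin n := ⟨1, by omega⟩
  by_cases hw : heisenbergWeight i + heisenbergWeight j = heisenbergWeight k
  swap
  · have hijk := mt (heisenbergWeight_add_eq_iff i j k).2 hw
    rw [if_neg hw, if_neg, if_neg] <;> simp [i₀, i₁, Fin.ext_iff] <;> omega
  rw [if_pos hw]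
  obtain ⟨hi, hj, hk⟩ := (heisenbergWeight_add_eq_iff i j k).1 hw
  have hspan : ∀ v ∈ Submodule.span F {b i₀, b i₁}, b.repr v k = 0 := fun v hv =>
    b.repr_apply_eq_zero_of_mem_span_pair hv (by simp [i₀, Fin.ext_iff]; omega)
      (by simp [i₁, Fin.ext_iff]; omega)
  have hsq : ∀ v ∈ ({b i₀, b i₁} : Set V), b.repr (B v v) k = 0 := fun v hv =>
    hspan _ (Submodule.span_le.2 (Set.singleton_subset_iff.2 (Submodule.subset_span hv)) (hB v))
  have hswap : b.repr (B (b i₁) (b i₀)) k = -b.repr (B (b i₀) (b i₁)) k := by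
    rw [eq_neg_iff_add_eq_zero, ← Finsupp.add_apply, ← map_add, add_comm]
    exact hspan _ (apply_add_apply_swap_mem_span_pair hB _ _)
  have h01 : i₀ ≠ i₁ := by simp [i₀, i₁]
  obtain rfl | rfl : i = i₀ ∨ i = i₁ := by simp [i₀, i₁, Fin.ext_iff]; omega
  all_goals obtain rfl | rfl : j = i₀ ∨ j = i₁ := by simp [i₀, i₁, Fin.ext_iff]; omega
  all_goals simp [structureConstants, hsq, hswap, hb, h01, Finsupp.single_apply, eq_comm,
    apply_ite]

end Heisenberg

/-- over an infinite field, an `n`-dimensional algebra (`n ≥ 3`) with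
`[x,x] ∈ span{x}` for all `x` but `[x,y] ∉ span{x,y}` for some `x,y` degenerates to
`h_n`, the Heisenberg algebra plus abelian: the structure vector `η` (with only nonzero
entries `η_{123} = 1 = -η_{213}`) lies in the closure of the orbit of any structure
vector of the algebra. -/
theorem degeneration_to_heisenberg {F V : Type*} [Field F] [Infinite F]
    [AddCommGroup V] [Module F V] [FiniteDimensional F V]
    {n : ℕ} (hn : 3 ≤ n) (hV : Module.finrank F V = n)
    (B : V →ₗ[F] V →ₗ[F] V)
    (h1 : ∀ x : V, B x x ∈ Submodule.span F {x})
    (h2 : ∃ x y : V, B x y ∉ Submodule.span F {x, y})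
    (eta : Fin n → Fin n → Fin n → F)
    (heta : ∀ i j k : Fin n,
      eta i j k =
        if i = (⟨0, by omega⟩ : Fin n) ∧ j = (⟨1, by omega⟩ : Fin n) ∧
            k = (⟨2, by omega⟩ : Fin n) then 1
        else if i = (⟨1, by omega⟩ : Fin n) ∧ j = (⟨0, by omega⟩ : Fin n) ∧
            k = (⟨2, by omega⟩ : Fin n) then -1
        else 0) :
    ∃ lam : Fin n → Fin n → Fin n → F,
      (∃ b : Module.Basis (Fin n) F V, ∀ i j, B (b i) (b j) = ∑ k, lam i j k • b k) ∧
      eta ∈ zClosure (orbitSV lam) := by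
  obtain ⟨x, y, hxy⟩ := h2
  obtain ⟨b, hb⟩ :=
    (linearIndependent_apply_of_notMem_span_pair h1 hxy).exists_basis_fin_extension hn hV
  have hbracket : B (b ⟨0, by omega⟩) (b ⟨1, by omega⟩) = b ⟨2, by omega⟩ :=
    (congrArg₂ (B · ·) (hb 0) (hb 1)).trans (hb 2).symm
  refine ⟨structureConstants b B, ⟨b, fun i j => (b.sum_repr _).symm⟩, ?_⟩
  convert mem_zClosure_orbitSV_of_weights (structureConstants b B) heisenbergWeight
    fun i j k _ => heisenbergWeight_le_add i j k using 1
  ext i j k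
  rw [heta, structureConstants_heisenberg_limit hn b h1 hbracket]
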